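/- arXiv:2001.00145 — 7 statements merged into one kernel-verified Lean document; each statement's English description precedes it below -/
import Mathlib

section
/- For any vectors a_u ∈ ℝˡ, a_a ∈ ℝᵐ, v ∈ ℝⁿ and u ∈ ℝᵐ, if D (B_c a_u + B a_a) + v = B u, then (Bᵀ A D B) a_a + Bᵀ A v = u. (Elimination of the unactuated accelerations from the Euler–Lagrange equations of an underactuated system.) -/
/-! The matrix `A` is the oblique projection onto `ker B_cᵀ` along the range of `D B_c`:
it kills `D B_c` and fixes `B`. Hence applying `Bᵀ A` to the equation of motion removes
the unactuated accelerations `a_u` and turns `B u` into `u`. -/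

open Matrix

namespace Matrix

variable {n k : Type*} [Fintype n] [Fintype k] [DecidableEq k]
  {R : Type*} [CommRing R]

lemma mulVec_injective_of_mul_eq_one {X : Matrix n k R} {Y : Matrix k n R}
    (hYX : Y * X = 1) : Function.Injective X.mulVec :=
  Function.LeftInverse.injective (g := Y.mulVec) fun x => by rw [mulVec_mulVec, hYX, one_mulVec]

lemma one_sub_mul_inv_mul_mul_self [DecidableEq n] {X : Matrix n k R} {Y : Matrix k n R}
    (h : IsUnit (Y * X).det) : (1 - X * (Y * X)⁻¹ * Y) * X = 0 := by
  rw [Matrix.sub_mul, Matrix.one_mul, Matrix.mul_assoc _ Y, Matrix.mul_assoc,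
    nonsing_inv_mul _ h, Matrix.mul_one, sub_self]

lemma one_sub_mul_inv_mul_mul_of_mul_eq_zero [DecidableEq n] {l : Type*} {X : Matrix n k R}
    {Y : Matrix k n R} {Z : Matrix n l R} (hYZ : Y * Z = 0) :
    (1 - X * (Y * X)⁻¹ * Y) * Z = Z := by
  rw [Matrix.sub_mul, Matrix.one_mul, Matrix.mul_assoc, hYZ, Matrix.mul_zero, sub_zero]

end Matrix

theorem stmt_1_general {l m : ℕ}
    (Bc : Matrix (Fin (l + m)) (Fin l) ℝ) (B : Matrix (Fin (l + m)) (Fin m) ℝ)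
    (D : Matrix (Fin (l + m)) (Fin (l + m)) ℝ)
    (hBc : Bcᵀ * Bc = 1) (hB : Bᵀ * B = 1) (hBcB : Bcᵀ * B = 0)
    (hD : D.PosDef)
    (A : Matrix (Fin (l + m)) (Fin (l + m)) ℝ)
    (hA : A = 1 - D * Bc * (Bcᵀ * D * Bc)⁻¹ * Bcᵀ)
    (a_u : Fin l → ℝ) (a_a : Fin m → ℝ) (v : Fin (l + m) → ℝ) (u : Fin m → ℝ)
    (heom : D *ᵥ (Bc *ᵥ a_u + B *ᵥ a_a) + v = B *ᵥ u) :
    (Bᵀ * A * D * B) *ᵥ a_a + (Bᵀ * A) *ᵥ v = u := by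
  have hA' : A = 1 - (D * Bc) * (Bcᵀ * (D * Bc))⁻¹ * Bcᵀ := by
    simp only [hA, Matrix.mul_assoc]
  have hD₁₁ : (Bcᵀ * (D * Bc)).PosDef := by
    simpa only [conjTranspose_eq_transpose_of_trivial, Matrix.mul_assoc] using
      hD.conjTranspose_mul_mul_same (mulVec_injective_of_mul_eq_one hBc)
  have hADBc : A * (D * Bc) = 0 :=
    hA' ▸ one_sub_mul_inv_mul_mul_self (isUnit_iff_ne_zero.mpr hD₁₁.det_pos.ne')
  have hAB : A * B = B := hA' ▸ one_sub_mul_inv_mul_mul_of_mul_eq_zero hBcB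
  calc (Bᵀ * A * D * B) *ᵥ a_a + (Bᵀ * A) *ᵥ v
      = (Bᵀ * A) *ᵥ (D *ᵥ (Bc *ᵥ a_u + B *ᵥ a_a) + v) := by
        simp only [mulVec_add, mulVec_mulVec, Matrix.mul_assoc, hADBc, Matrix.mul_zero,
          zero_mulVec, zero_add]
    _ = u := by rw [heom, mulVec_mulVec, Matrix.mul_assoc, hAB, hB, one_mulVec]

/-- Elimination of the unactuated accelerations from the Euler–Lagrange
equations of an underactuated system: if `D (B_c a_u + B a_a) + v = B u`, then
`(Bᵀ A D B) a_a + Bᵀ A v = u`. -/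
theorem stmt_1 {l m : ℕ} (hl : 1 ≤ l) (hm : 1 ≤ m)
    (Bc : Matrix (Fin (l + m)) (Fin l) ℝ) (B : Matrix (Fin (l + m)) (Fin m) ℝ)
    (D : Matrix (Fin (l + m)) (Fin (l + m)) ℝ)
    (hBc : Bcᵀ * Bc = 1) (hB : Bᵀ * B = 1) (hBcB : Bcᵀ * B = 0)
    (hsum : Bc * Bcᵀ + B * Bᵀ = 1)
    (hD : D.PosDef)
    (A : Matrix (Fin (l + m)) (Fin (l + m)) ℝ)
    (hA : A = 1 - D * Bc * (Bcᵀ * D * Bc)⁻¹ * Bcᵀ)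
    (a_u : Fin l → ℝ) (a_a : Fin m → ℝ) (v : Fin (l + m) → ℝ) (u : Fin m → ℝ)
    (heom : D *ᵥ (Bc *ᵥ a_u + B *ᵥ a_a) + v = B *ᵥ u) :
    (Bᵀ * A * D * B) *ᵥ a_a + (Bᵀ * A) *ᵥ v = u :=
  stmt_1_general Bc B D hBc hB hBcB hD A hA a_u a_a v u heom
end

section
/- If there are constants 0 < c_l ≤ c_u such that c_l|x|² ≤ xᵀ D x ≤ c_u|x|² for all x ∈ ℝⁿ, then the same bounds hold for the Schur complement matrix: c_l|y|² ≤ yᵀ (Bᵀ A D B) y ≤ c_u|y|² for all y ∈ ℝᵐ. -/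
/-!
Write `K = (Bcᵀ D Bc)⁻¹` and `E = Bcᵀ D B`, so that `Bᵀ A D B = Bᵀ D B - Eᵀ K E` is the Schur
complement of the block `Bcᵀ D Bc`. Completing the square, `yᵀ S y = xᵀ D x` for the lift
`x = B y - Bc K E y`, and `|x| ≥ |y|` because `B` is an isometry with range orthogonal to that
of `Bc`; this gives the lower bound. For the upper bound, `Eᵀ K E` is positive semidefinite, so
`yᵀ S y ≤ (B y)ᵀ D (B y) ≤ c_u |B y|² = c_u |y|²`.
-/

open Matrix

variable {n k m : Type*} [Fintype n] [Fintype k]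

theorem mulVec_dotProduct_mulVec {R : Type*} [CommSemiring R] [Fintype m] (P : Matrix n k R)
    (Q : Matrix n m R) (x : k → R) (y : m → R) :
    (P *ᵥ x) ⬝ᵥ (Q *ᵥ y) = x ⬝ᵥ ((Pᵀ * Q) *ᵥ y) := by
  rw [← mulVec_mulVec, dotProduct_mulVec x, vecMul_transpose]

theorem dotProduct_self_le_of_orthogonal [Fintype m] [DecidableEq m] {B : Matrix n m ℝ}
    {Bc : Matrix n k ℝ} (hB : Bᵀ * B = 1) (hBcB : Bcᵀ * B = 0) (y : m → ℝ) (w : k → ℝ) :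
    y ⬝ᵥ y ≤ (B *ᵥ y + Bc *ᵥ w) ⬝ᵥ (B *ᵥ y + Bc *ᵥ w) := by
  have hcross : (Bc *ᵥ w) ⬝ᵥ (B *ᵥ y) = 0 := by
    rw [mulVec_dotProduct_mulVec, hBcB, zero_mulVec, dotProduct_zero]
  have hsq : (B *ᵥ y) ⬝ᵥ (B *ᵥ y) = y ⬝ᵥ y := by
    rw [mulVec_dotProduct_mulVec, hB, one_mulVec]
  have hnonneg : 0 ≤ (Bc *ᵥ w) ⬝ᵥ (Bc *ᵥ w) := dotProduct_self_star_nonneg _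
  simp only [dotProduct_add, add_dotProduct, dotProduct_comm (B *ᵥ y) (Bc *ᵥ w), hcross, hsq]
  linarith

theorem Matrix.PosDef.transpose_mul_mul_of_transpose_mul_self_eq_one [DecidableEq k]
    {D : Matrix n n ℝ} (hD : D.PosDef) {P : Matrix n k ℝ} (hP : Pᵀ * P = 1) :
    (Pᵀ * D * P).PosDef := by
  refine hD.conjTranspose_mul_mul_same (Function.LeftInverse.injective (g := (Pᵀ *ᵥ ·)) ?_)
  intro x
  simp only [mulVec_mulVec, hP, one_mulVec]

section Schur

variable {R : Type*} [CommRing R] [DecidableEq k]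

noncomputable def schurComplement (Bc : Matrix n k R) (B : Matrix n m R) (D : Matrix n n R) :
    Matrix m m R :=
  Bᵀ * D * B - Bᵀ * D * Bc * (Bcᵀ * D * Bc)⁻¹ * (Bcᵀ * D * B)

theorem transpose_mul_mul_eq_schurComplement {Bc : Matrix n k R} {B : Matrix n m R}
    {D : Matrix n n R} (hD : D.IsSymm) (hD₁₁ : IsUnit (Bcᵀ * D * Bc).det) :
    (B - Bc * (Bcᵀ * D * Bc)⁻¹ * (Bcᵀ * D * B))ᵀ * D *
      (B - Bc * (Bcᵀ * D * Bc)⁻¹ * (Bcᵀ * D * B)) = schurComplement Bc B D := by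
  have hK : ((Bcᵀ * D * Bc)⁻¹)ᵀ = (Bcᵀ * D * Bc)⁻¹ := by
    rw [transpose_nonsing_inv, transpose_mul, transpose_mul, transpose_transpose, hD.eq,
      Matrix.mul_assoc]
  have hKD : (Bcᵀ * D * Bc)⁻¹ * (Bcᵀ * D * Bc) = 1 := nonsing_inv_mul _ hD₁₁
  unfold schurComplement
  generalize (Bcᵀ * D * Bc)⁻¹ = K at hK hKD ⊢
  have hKD' (X : Matrix k m R) : K * (Bcᵀ * (D * (Bc * X))) = X := by
    rw [← Matrix.mul_assoc Bcᵀ, ← Matrix.mul_assoc (Bcᵀ * D), ← Matrix.mul_assoc, hKD,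
      Matrix.one_mul]
  simp only [transpose_sub, transpose_mul, transpose_transpose, hK, hD.eq,
    Matrix.sub_mul, Matrix.mul_sub, Matrix.mul_assoc, hKD']
  abel

theorem exists_dotProduct_schurComplement_mulVec_eq [Fintype m] {Bc : Matrix n k R}
    {B : Matrix n m R} {D : Matrix n n R} (hD : D.IsSymm) (hD₁₁ : IsUnit (Bcᵀ * D * Bc).det)
    (y : m → R) :
    ∃ w : k → R, y ⬝ᵥ (schurComplement Bc B D *ᵥ y) =
      (B *ᵥ y + Bc *ᵥ w) ⬝ᵥ (D *ᵥ (B *ᵥ y + Bc *ᵥ w)) := by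
  have hS := transpose_mul_mul_eq_schurComplement (B := B) hD hD₁₁
  generalize hP : B - Bc * (Bcᵀ * D * Bc)⁻¹ * (Bcᵀ * D * B) = P at hS
  refine ⟨-(((Bcᵀ * D * Bc)⁻¹ * (Bcᵀ * D * B)) *ᵥ y), ?_⟩
  have hPy : P *ᵥ y = B *ᵥ y + Bc *ᵥ -(((Bcᵀ * D * Bc)⁻¹ * (Bcᵀ * D * B)) *ᵥ y) := by
    rw [← hP, sub_mulVec, mulVec_neg, mulVec_mulVec, Matrix.mul_assoc, sub_eq_add_neg]
  rw [← hS, Matrix.mul_assoc, ← mulVec_dotProduct_mulVec, ← mulVec_mulVec, hPy]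

theorem dotProduct_schurComplement_mulVec_le [Fintype m] {Bc : Matrix n k ℝ}
    {B : Matrix n m ℝ} {D : Matrix n n ℝ} (hD : D.PosDef) (hBc : Bcᵀ * Bc = 1) (y : m → ℝ) :
    y ⬝ᵥ (schurComplement Bc B D *ᵥ y) ≤ (B *ᵥ y) ⬝ᵥ (D *ᵥ (B *ᵥ y)) := by
  have hD₁₁ : (Bcᵀ * D * Bc).PosDef := hD.transpose_mul_mul_of_transpose_mul_self_eq_one hBc
  have hE : Bᵀ * D * Bc = (Bcᵀ * D * B)ᵀ := by
    rw [transpose_mul, transpose_mul, transpose_transpose,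
      (isHermitian_iff_isSymm.mp hD.isHermitian).eq, Matrix.mul_assoc]
  have hcorr : 0 ≤ y ⬝ᵥ ((Bᵀ * D * Bc * (Bcᵀ * D * Bc)⁻¹ * (Bcᵀ * D * B)) *ᵥ y) := by
    rw [hE, ← mulVec_mulVec, ← mulVec_dotProduct_mulVec]
    simpa using hD₁₁.inv.posSemidef.dotProduct_mulVec_nonneg ((Bcᵀ * D * B) *ᵥ y)
  rw [mulVec_dotProduct_mulVec, mulVec_mulVec, schurComplement, sub_mulVec, dotProduct_sub]
  linarith

end Schur

theorem stmt_5_general {l m : ℕ}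
    (Bc : Matrix (Fin (l + m)) (Fin l) ℝ) (B : Matrix (Fin (l + m)) (Fin m) ℝ)
    (D : Matrix (Fin (l + m)) (Fin (l + m)) ℝ)
    (hBc : Bcᵀ * Bc = 1) (hB : Bᵀ * B = 1) (hBcB : Bcᵀ * B = 0)
    (hD : D.PosDef)
    (A : Matrix (Fin (l + m)) (Fin (l + m)) ℝ)
    (hA : A = 1 - D * Bc * (Bcᵀ * D * Bc)⁻¹ * Bcᵀ)
    (c_l c_u : ℝ) (hcl : 0 < c_l)
    (hDbound : ∀ x : Fin (l + m) → ℝ,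
      c_l * (x ⬝ᵥ x) ≤ x ⬝ᵥ (D *ᵥ x) ∧ x ⬝ᵥ (D *ᵥ x) ≤ c_u * (x ⬝ᵥ x)) :
    ∀ y : Fin m → ℝ,
      c_l * (y ⬝ᵥ y) ≤ y ⬝ᵥ ((Bᵀ * A * D * B) *ᵥ y) ∧
      y ⬝ᵥ ((Bᵀ * A * D * B) *ᵥ y) ≤ c_u * (y ⬝ᵥ y) := by
  have hS : Bᵀ * A * D * B = schurComplement Bc B D := by
    simp only [hA, schurComplement, Matrix.mul_sub, Matrix.sub_mul, Matrix.mul_one,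
      Matrix.mul_assoc]
  have hD₁₁ : IsUnit (Bcᵀ * D * Bc).det :=
    (isUnit_iff_isUnit_det _).mp (hD.transpose_mul_mul_of_transpose_mul_self_eq_one hBc).isUnit
  intro y
  obtain ⟨w, hw⟩ := exists_dotProduct_schurComplement_mulVec_eq (B := B)
    (isHermitian_iff_isSymm.mp hD.isHermitian) hD₁₁ y
  rw [hS]
  constructor
  · calc c_l * (y ⬝ᵥ y) ≤ c_l * ((B *ᵥ y + Bc *ᵥ w) ⬝ᵥ (B *ᵥ y + Bc *ᵥ w)) :=
          mul_le_mul_of_nonneg_left (dotProduct_self_le_of_orthogonal hB hBcB y w) hcl.le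
      _ ≤ _ := (hDbound _).1
      _ = _ := hw.symm
  · calc y ⬝ᵥ (schurComplement Bc B D *ᵥ y) ≤ (B *ᵥ y) ⬝ᵥ (D *ᵥ (B *ᵥ y)) :=
          dotProduct_schurComplement_mulVec_le hD hBc y
      _ ≤ c_u * ((B *ᵥ y) ⬝ᵥ (B *ᵥ y)) := (hDbound _).2
      _ = c_u * (y ⬝ᵥ y) := by rw [mulVec_dotProduct_mulVec, hB, one_mulVec]

/-- If `c_l |x|² ≤ xᵀ D x ≤ c_u |x|²` for all `x ∈ ℝⁿ`, then the same
bounds hold for the Schur complement matrix: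
`c_l |y|² ≤ yᵀ (Bᵀ A D B) y ≤ c_u |y|²` for all `y ∈ ℝᵐ`. -/
theorem stmt_5 {l m : ℕ} (hl : 1 ≤ l) (hm : 1 ≤ m)
    (Bc : Matrix (Fin (l + m)) (Fin l) ℝ) (B : Matrix (Fin (l + m)) (Fin m) ℝ)
    (D : Matrix (Fin (l + m)) (Fin (l + m)) ℝ)
    (hBc : Bcᵀ * Bc = 1) (hB : Bᵀ * B = 1) (hBcB : Bcᵀ * B = 0)
    (hsum : Bc * Bcᵀ + B * Bᵀ = 1)
    (hD : D.PosDef)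
    (A : Matrix (Fin (l + m)) (Fin (l + m)) ℝ)
    (hA : A = 1 - D * Bc * (Bcᵀ * D * Bc)⁻¹ * Bcᵀ)
    (c_l c_u : ℝ) (hcl : 0 < c_l) (hclu : c_l ≤ c_u)
    (hDbound : ∀ x : Fin (l + m) → ℝ,
      c_l * (x ⬝ᵥ x) ≤ x ⬝ᵥ (D *ᵥ x) ∧ x ⬝ᵥ (D *ᵥ x) ≤ c_u * (x ⬝ᵥ x)) :
    ∀ y : Fin m → ℝ,
      c_l * (y ⬝ᵥ y) ≤ y ⬝ᵥ ((Bᵀ * A * D * B) *ᵥ y) ∧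
      y ⬝ᵥ ((Bᵀ * A * D * B) *ᵥ y) ≤ c_u * (y ⬝ᵥ y) :=
  stmt_5_general Bc B D hBc hB hBcB hD A hA c_l c_u hcl hDbound
end

section
/- For every t in the interval, D_e(t) is symmetric, and D_e′(t) − 2 C_e(t) is skew-symmetric; moreover, if D(t) is positive definite then D_e(t) is positive definite. (Transfer of the skew-symmetry property of Ḋ − 2C under the change of coordinates by J.) -/
/-!
With `P = J⁻¹` we have `D_e = Pᵀ D P`, so symmetry and positive definiteness pass to `D_e` by
congruence. The product rule gives `D_e′ = P′ᵀ D P + Pᵀ D′ P + Pᵀ D P′`, hence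
`D_e′ − 2 C_e = (P′ᵀ D P − Pᵀ D P′) + Pᵀ (D′ − 2C) P`: the first bracket is skew because `D` is
symmetric, the second is congruent to a skew matrix. The differentiability of `J⁻¹` needed for
the product rule comes from `J⁻¹ = (det J)⁻¹ • adj J`, whose entries are polynomial in those
of `J` divided by a nonvanishing determinant.
-/

open Matrix

attribute [local instance] Matrix.normedAddCommGroup Matrix.normedSpace

section MatrixCalculus

variable {𝕜 : Type*} [NontriviallyNormedField 𝕜] {l m n : Type*} [Fintype n] {t : 𝕜}

theorem hasDerivAt_matrix_iff {A : 𝕜 → Matrix m n 𝕜} {A' : Matrix m n 𝕜} :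
    HasDerivAt A A' t ↔ ∀ i j, HasDerivAt (fun s => A s i j) (A' i j) t :=
  ⟨fun h i j => hasDerivAt_pi.mp (hasDerivAt_pi.mp h i) j,
    fun h => hasDerivAt_pi.mpr fun i => hasDerivAt_pi.mpr (h i)⟩

theorem differentiableAt_matrix_iff {A : 𝕜 → Matrix m n 𝕜} :
    DifferentiableAt 𝕜 A t ↔ ∀ i j, DifferentiableAt 𝕜 (fun s => A s i j) t :=
  ⟨fun h i j => differentiableAt_pi.mp (differentiableAt_pi.mp h i) j,
    fun h => differentiableAt_pi.mpr fun i => differentiableAt_pi.mpr (h i)⟩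

theorem HasDerivAt.matrix_mul [Fintype m] {A : 𝕜 → Matrix l m 𝕜} {B : 𝕜 → Matrix m n 𝕜}
    {A' : Matrix l m 𝕜} {B' : Matrix m n 𝕜} (hA : HasDerivAt A A' t) (hB : HasDerivAt B B' t) :
    HasDerivAt (fun s => A s * B s) (A' * B t + A t * B') t := by
  rw [hasDerivAt_matrix_iff] at hA hB ⊢
  intro i j
  simp only [mul_apply, Matrix.add_apply, ← Finset.sum_add_distrib]
  exact HasDerivAt.fun_sum fun k _ => (hA i k).mul (hB k j)

theorem HasDerivAt.matrix_transpose [Fintype m] {A : 𝕜 → Matrix m n 𝕜} {A' : Matrix m n 𝕜}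
    (hA : HasDerivAt A A' t) : HasDerivAt (fun s => (A s)ᵀ) A'ᵀ t :=
  hasDerivAt_matrix_iff.mpr fun i j => hasDerivAt_matrix_iff.mp hA j i

theorem HasDerivAt.matrix_transpose_mul_mul [Fintype m] {P : 𝕜 → Matrix m n 𝕜}
    {A : 𝕜 → Matrix m m 𝕜} {P' : Matrix m n 𝕜} {A' : Matrix m m 𝕜}
    (hP : HasDerivAt P P' t) (hA : HasDerivAt A A' t) :
    HasDerivAt (fun s => (P s)ᵀ * A s * P s)
      (P'ᵀ * A t * P t + (P t)ᵀ * A' * P t + (P t)ᵀ * A t * P') t := by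
  simpa only [Matrix.add_mul] using (hP.matrix_transpose.matrix_mul hA).matrix_mul hP

variable [DecidableEq n]

theorem DifferentiableAt.matrix_det {A : 𝕜 → Matrix n n 𝕜} (hA : DifferentiableAt 𝕜 A t) :
    DifferentiableAt 𝕜 (fun s => (A s).det) t := by
  rw [differentiableAt_matrix_iff] at hA
  simp only [det_apply, Units.smul_def, zsmul_eq_mul]
  exact DifferentiableAt.fun_sum fun σ _ =>
    (DifferentiableAt.fun_finsetProd fun i _ => hA (σ i) i).const_mul _

theorem DifferentiableAt.matrix_adjugate {A : 𝕜 → Matrix n n 𝕜} (hA : DifferentiableAt 𝕜 A t) :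
    DifferentiableAt 𝕜 (fun s => (A s).adjugate) t := by
  rw [differentiableAt_matrix_iff]
  intro i j
  simp only [adjugate_apply]
  refine DifferentiableAt.matrix_det (differentiableAt_matrix_iff.mpr fun k l => ?_)
  by_cases hk : k = j
  · simp [updateRow_apply, hk]
  · simpa [updateRow_apply, hk] using differentiableAt_matrix_iff.mp hA k l

theorem DifferentiableAt.matrix_inv {A : 𝕜 → Matrix n n 𝕜} (hA : DifferentiableAt 𝕜 A t)
    (hdet : (A t).det ≠ 0) : DifferentiableAt 𝕜 (fun s => (A s)⁻¹) t := by
  simp only [inv_def, Ring.inverse_eq_inv]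
  exact (hA.matrix_det.inv hdet).smul hA.matrix_adjugate

end MatrixCalculus

namespace Matrix

variable {α : Type*} [CommRing α] {m n : Type*} [Fintype n]

theorem IsSymm.transpose_mul_mul_same {A : Matrix n n α} (hA : A.IsSymm)
    (B : Matrix n m α) : (Bᵀ * A * B).IsSymm := by
  simp [IsSymm, transpose_mul, hA.eq, Matrix.mul_assoc]

theorem transpose_mul_mul_sub_add_eq_neg {D W : Matrix n n α} (P Q : Matrix n m α)
    (hD : D.IsSymm) (hW : Wᵀ = -W) :
    (Qᵀ * D * P - Pᵀ * D * Q + Pᵀ * W * P)ᵀ = -(Qᵀ * D * P - Pᵀ * D * Q + Pᵀ * W * P) := by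
  simp only [transpose_add, transpose_sub, transpose_mul, transpose_transpose, hD.eq, hW,
    Matrix.mul_neg, Matrix.neg_mul, Matrix.mul_assoc]
  abel

end Matrix

theorem stmt_6_general {n : ℕ} (a b : ℝ)
    (J D C : ℝ → Matrix (Fin n) (Fin n) ℝ)
    (hJdiff : DifferentiableOn ℝ J (Set.Ioo a b))
    (hDdiff : DifferentiableOn ℝ D (Set.Ioo a b))
    (hJinv : ∀ t ∈ Set.Ioo a b, IsUnit (J t).det)
    (hDsymm : ∀ t ∈ Set.Ioo a b, (D t).IsSymm)
    (hskew : ∀ t ∈ Set.Ioo a b, (deriv D t - 2 • C t)ᵀ = -(deriv D t - 2 • C t))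
    (De Ce : ℝ → Matrix (Fin n) (Fin n) ℝ)
    (hDe : ∀ t, De t = (J t)⁻¹ᵀ * D t * (J t)⁻¹)
    (hCe : ∀ t, Ce t = (J t)⁻¹ᵀ * C t * (J t)⁻¹ +
      (J t)⁻¹ᵀ * D t * deriv (fun s => (J s)⁻¹) t) :
    ∀ t ∈ Set.Ioo a b,
      (De t).IsSymm ∧
      (deriv De t - 2 • Ce t)ᵀ = -(deriv De t - 2 • Ce t) ∧
      ((D t).PosDef → (De t).PosDef) := by
  intro t ht
  have hdet : IsUnit (J t).det := hJinv t ht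
  have hJt : DifferentiableAt ℝ J t := hJdiff.differentiableAt (isOpen_Ioo.mem_nhds ht)
  have hDt : DifferentiableAt ℝ D t := hDdiff.differentiableAt (isOpen_Ioo.mem_nhds ht)
  have hP : HasDerivAt (fun s => (J s)⁻¹) (deriv (fun s => (J s)⁻¹) t) t :=
    (hJt.matrix_inv hdet.ne_zero).hasDerivAt
  set P := (J t)⁻¹
  set P' := deriv (fun s => (J s)⁻¹) t
  have hDe' : deriv De t = P'ᵀ * D t * P + Pᵀ * deriv D t * P + Pᵀ * D t * P' := by
    rw [funext hDe]
    exact (hP.matrix_transpose_mul_mul hDt.hasDerivAt).deriv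
  refine ⟨hDe t ▸ (hDsymm t ht).transpose_mul_mul_same P, ?_, fun hpd => ?_⟩
  · have hX : deriv De t - 2 • Ce t =
        P'ᵀ * D t * P - Pᵀ * D t * P' + Pᵀ * (deriv D t - 2 • C t) * P := by
      simp only [hDe', hCe, Matrix.mul_sub, Matrix.sub_mul, Matrix.mul_smul, Matrix.smul_mul,
        smul_add]
      abel
    rw [hX]
    exact transpose_mul_mul_sub_add_eq_neg P P' (hDsymm t ht) (hskew t ht)
  · have hPunit : IsUnit P := isUnit_nonsing_inv_iff.mpr ((isUnit_iff_isUnit_det _).mpr hdet)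
    rw [hDe t, ← conjTranspose_eq_transpose_of_trivial]
    exact hpd.conjTranspose_mul_mul_same (mulVec_injective_of_isUnit hPunit)

/-- Transfer of the skew-symmetry property of `Ḋ − 2C` under the change
of coordinates by `J`: for `D_e = J⁻ᵀ D J⁻¹` and
`C_e = J⁻ᵀ C J⁻¹ + J⁻ᵀ D (d/dt)(J⁻¹)`, at every `t` in the open interval `I`,
`D_e(t)` is symmetric, `D_e′(t) − 2 C_e(t)` is skew-symmetric, and `D_e(t)` is
positive definite whenever `D(t)` is. -/
theorem stmt_6 {n : ℕ} (hn : 1 ≤ n) (a b : ℝ)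
    (J D C : ℝ → Matrix (Fin n) (Fin n) ℝ)
    (hJdiff : DifferentiableOn ℝ J (Set.Ioo a b))
    (hDdiff : DifferentiableOn ℝ D (Set.Ioo a b))
    (hCdiff : DifferentiableOn ℝ C (Set.Ioo a b))
    (hJinv : ∀ t ∈ Set.Ioo a b, IsUnit (J t).det)
    (hDsymm : ∀ t ∈ Set.Ioo a b, (D t).IsSymm)
    (hskew : ∀ t ∈ Set.Ioo a b, (deriv D t - 2 • C t)ᵀ = -(deriv D t - 2 • C t))
    (De Ce : ℝ → Matrix (Fin n) (Fin n) ℝ)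
    (hDe : ∀ t, De t = (J t)⁻¹ᵀ * D t * (J t)⁻¹)
    (hCe : ∀ t, Ce t = (J t)⁻¹ᵀ * C t * (J t)⁻¹ +
      (J t)⁻¹ᵀ * D t * deriv (fun s => (J s)⁻¹) t) :
    ∀ t ∈ Set.Ioo a b,
      (De t).IsSymm ∧
      (deriv De t - 2 • Ce t)ᵀ = -(deriv De t - 2 • Ce t) ∧
      ((D t).PosDef → (De t).PosDef) :=
  stmt_6_general a b J D C hJdiff hDdiff hJinv hDsymm hskew De Ce hDe hCe
end

section
/- For all e, ė ∈ ℝᵐ: (c_l/4)(k_p|e|² + |ė|²) ≤ V_e(e, ė) ≤ c_u (k_p|e|² + |ė|²). In particular, the Lyapunov candidate V_e with the cross term is positive definite, with equivalence constants c_l/4 and c_u independent of the proportional gain k_p. -/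
open Matrix

lemma aux_dot_self_nonneg {m : ℕ} (v : Fin m → ℝ) : 0 ≤ v ⬝ᵥ v :=
  Finset.sum_nonneg fun i _ => mul_self_nonneg (v i)

/-- Cauchy-Schwarz type bound for a PSD symmetric bilinear form with parameter. -/
lemma aux_cs {m : ℕ} (M : Matrix (Fin m) (Fin m) ℝ) (hM : M.IsSymm)
    (hpsd : ∀ v : Fin m → ℝ, 0 ≤ v ⬝ᵥ (M *ᵥ v)) (s : ℝ) (hs : 0 < s)
    (e e' : Fin m → ℝ) :
    |2 * s * (e ⬝ᵥ (M *ᵥ e'))| ≤ s ^ 2 * (e ⬝ᵥ (M *ᵥ e)) + e' ⬝ᵥ (M *ᵥ e') := by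
  have hsym : e' ⬝ᵥ (M *ᵥ e) = e ⬝ᵥ (M *ᵥ e') := by
    conv_lhs => rw [dotProduct_mulVec, ← hM, vecMul_transpose]
    exact dotProduct_comm _ _
  have h1 := hpsd (s • e + e')
  have h2 := hpsd (s • e - e')
  simp only [mulVec_add, mulVec_sub, mulVec_smul, dotProduct_add, add_dotProduct,
    dotProduct_sub, sub_dotProduct, smul_dotProduct, dotProduct_smul, smul_eq_mul,
    hsym] at h1 h2
  rw [abs_le]
  constructor <;> nlinarith [h1, h2]

lemma aux_final (c_l c_u k_p a b Q t : ℝ)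
    (hcl : 0 < c_l) (hcl1 : c_l ≤ 1) (hcu : 1 ≤ c_u) (hkp : 1 ≤ k_p)
    (ha : 0 ≤ a) (hb : 0 ≤ b)
    (hq1 : c_l * b ≤ Q) (hq2 : Q ≤ c_u * b)
    (hlo : -(c_l / 4 * (k_p * a + b)) ≤ t) (hhi : t ≤ c_l / 4 * (k_p * a + b)) :
    c_l / 4 * (k_p * a + b) ≤ 1/2 * k_p * a + 1/2 * Q + t ∧
    1/2 * k_p * a + 1/2 * Q + t ≤ c_u * (k_p * a + b) := by
  have hka : 0 ≤ k_p * a := mul_nonneg (by linarith) ha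
  constructor
  · nlinarith [mul_nonneg (show (0:ℝ) ≤ 1 - c_l by linarith) hka]
  · nlinarith [mul_nonneg (show (0:ℝ) ≤ c_u - 3/4 by linarith) hka,
      mul_nonneg (show (0:ℝ) ≤ 2 * c_u - c_l by linarith) hb]

/-- The Lyapunov candidate
`V_e(e, e') = (1/2) k_p |e|² + (1/2) e'ᵀ M e' + α(e) eᵀ M e'` with `α(e) = k₀/(1+|e|)`,
`k₀ = √k_p / N`, `N ≥ 2 c_u / c_l`, satisfies
`(c_l/4)(k_p|e|² + |e'|²) ≤ V_e(e, e') ≤ c_u (k_p|e|² + |e'|²)` for all `e, e' ∈ ℝᵐ`. -/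
theorem stmt_8 {m : ℕ} (hm : 1 ≤ m)
    (M : Matrix (Fin m) (Fin m) ℝ) (c_l c_u k_p N k₀ : ℝ)
    (hcl : 0 < c_l) (hcl1 : c_l ≤ 1) (hcu : 1 ≤ c_u)
    (hM : M.IsSymm)
    (hMbound : ∀ v : Fin m → ℝ,
      c_l * (v ⬝ᵥ v) ≤ v ⬝ᵥ (M *ᵥ v) ∧ v ⬝ᵥ (M *ᵥ v) ≤ c_u * (v ⬝ᵥ v))
    (hkp : 1 ≤ k_p) (hN : 2 * c_u / c_l ≤ N) (hk0 : k₀ = Real.sqrt k_p / N)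
    (α : (Fin m → ℝ) → ℝ)
    (hα : ∀ e : Fin m → ℝ, α e = k₀ / (1 + Real.sqrt (e ⬝ᵥ e)))
    (V : (Fin m → ℝ) → (Fin m → ℝ) → ℝ)
    (hV : ∀ e e' : Fin m → ℝ, V e e' =
      (1/2) * k_p * (e ⬝ᵥ e) + (1/2) * (e' ⬝ᵥ (M *ᵥ e')) + α e * (e ⬝ᵥ (M *ᵥ e'))) :
    ∀ e e' : Fin m → ℝ,
      c_l / 4 * (k_p * (e ⬝ᵥ e) + e' ⬝ᵥ e') ≤ V e e' ∧
      V e e' ≤ c_u * (k_p * (e ⬝ᵥ e) + e' ⬝ᵥ e') := by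
  intro e e'
  have hkp0 : (0:ℝ) ≤ k_p := by linarith
  have hs1 : 1 ≤ Real.sqrt k_p := by
    rw [show (1:ℝ) = Real.sqrt 1 by simp]
    exact Real.sqrt_le_sqrt hkp
  set s := Real.sqrt k_p with hsdef
  have hs0 : 0 < s := by linarith
  have hs2 : s ^ 2 = k_p := Real.sq_sqrt hkp0
  have hNpos : 0 < N := lt_of_lt_of_le (by positivity) hN
  have hk0nn : 0 ≤ k₀ := by rw [hk0]; positivity
  have hpsd : ∀ v : Fin m → ℝ, 0 ≤ v ⬝ᵥ (M *ᵥ v) := fun v =>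
    le_trans (mul_nonneg hcl.le (aux_dot_self_nonneg v)) (hMbound v).1
  have hdee : 0 ≤ e ⬝ᵥ e := aux_dot_self_nonneg e
  have hdee' : 0 ≤ e' ⬝ᵥ e' := aux_dot_self_nonneg e'
  have hαnn : 0 ≤ α e := by
    rw [hα]
    exact div_nonneg hk0nn (by positivity)
  have hαle : α e ≤ k₀ := by
    rw [hα]
    have h1 : 0 ≤ Real.sqrt (e ⬝ᵥ e) := Real.sqrt_nonneg _
    rw [div_le_iff₀ (by linarith)]
    nlinarith
  have hcuN : c_u ≤ N * c_l / 2 := by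
    have := (div_le_iff₀ hcl).mp hN
    linarith
  have hQe := hMbound e
  have hQe' := hMbound e'
  set X := k_p * (e ⬝ᵥ e) + e' ⬝ᵥ e' with hXdef
  have hX : 0 ≤ X := by positivity
  set B := e ⬝ᵥ (M *ᵥ e') with hBdef
  -- bound |B|
  have hB2 : 2 * s * |B| ≤ c_u * X := by
    have h := aux_cs M hM hpsd s hs0 e e'
    rw [abs_mul, abs_of_nonneg (by linarith : (0:ℝ) ≤ 2 * s)] at h
    have h3 : s ^ 2 * (e ⬝ᵥ (M *ᵥ e)) ≤ k_p * (c_u * (e ⬝ᵥ e)) := by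
      rw [hs2]
      exact mul_le_mul_of_nonneg_left hQe.2 hkp0
    have h4 := hQe'.2
    rw [hXdef]
    nlinarith
  -- cross term bound
  have hcross : |α e * B| ≤ c_l / 4 * X := by
    rw [abs_mul, abs_of_nonneg hαnn]
    have step1 : α e * |B| ≤ s / N * |B| := by
      apply mul_le_mul_of_nonneg_right _ (abs_nonneg _)
      rw [← hk0]; exact hαle
    have step2 : s / N * |B| = (2 * s * |B|) / (2 * N) := by
      field_simp
    have step3 : (2 * s * |B|) / (2 * N) ≤ (c_u * X) / (2 * N) := by
      gcongr
    have step4 : (c_u * X) / (2 * N) ≤ c_l / 4 * X := by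
      rw [div_le_iff₀ (by linarith)]
      nlinarith [mul_le_mul_of_nonneg_right hcuN hX]
    calc α e * |B| ≤ s / N * |B| := step1
      _ = (2 * s * |B|) / (2 * N) := step2
      _ ≤ (c_u * X) / (2 * N) := step3
      _ ≤ c_l / 4 * X := step4
  rw [hV]
  rcases abs_le.mp hcross with ⟨hlo, hhi⟩
  rw [hXdef] at hlo hhi
  exact aux_final c_l c_u k_p (e ⬝ᵥ e) (e' ⬝ᵥ e') (e' ⬝ᵥ (M *ᵥ e')) (α e * B)
    hcl hcl1 hcu hkp hdee hdee' hQe'.1 hQe'.2 hlo hhi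
end

section
/- For all e, ė ∈ ℝᵐ, the quadratic forms agree: (e, ė)ᵀ Λ (e, ė) = (ε e, k ė)ᵀ Λ_{B_e} (ε e, k ė). Consequently, if Λ_{B_e} is positive definite then (e, ė)ᵀ Λ (e, ė) > 0 whenever (e, ė) ≠ 0. -/
/-!
With `D = diag(ε I, k I)` one has `Λ = Dᵀ Λ_{B_e} D`: since `α⁻¹ = k (1 + |e|) / ε`, the four
blocks of `Λ` are those of `Λ_{B_e}` scaled by `ε²`, `ε k`, `k ε`, `k²`. The quadratic form of
`Λ` at `x` is therefore that of `Λ_{B_e}` at `D x`, and congruence by the invertible `D`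
preserves positive definiteness.
-/

open Matrix

section BlockScalar

variable {n R : Type*} [DecidableEq n]

def blockScalar [Zero R] (a b : R) : Matrix (n ⊕ n) (n ⊕ n) R :=
  diagonal (Sum.elim (fun _ => a) (fun _ => b))

theorem blockScalar_transpose [Zero R] (a b : R) :
    (blockScalar a b : Matrix (n ⊕ n) (n ⊕ n) R)ᵀ = blockScalar a b :=
  diagonal_transpose _

theorem blockScalar_mulVec_sumElim [Fintype n] [CommSemiring R] (a b : R) (u v : n → R) :
    blockScalar a b *ᵥ Sum.elim u v = Sum.elim (a • u) (b • v) := by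
  ext (i | i) <;> simp [blockScalar, mulVec_diagonal]

theorem blockScalar_mul_fromBlocks_mul [Fintype n] [CommSemiring R] (a b : R)
    (P Q S T : Matrix n n R) :
    blockScalar a b * fromBlocks P Q S T * blockScalar a b =
      fromBlocks ((a * a) • P) ((a * b) • Q) ((b * a) • S) ((b * b) • T) := by
  ext (i | i) (j | j) <;> simp [blockScalar, mul_comm, mul_left_comm]

theorem injective_blockScalar_mulVec [Fintype n] {K : Type*} [Field K] {a b : K}
    (ha : a ≠ 0) (hb : b ≠ 0) :
    Function.Injective (blockScalar a b : Matrix (n ⊕ n) (n ⊕ n) K).mulVec := by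
  rw [mulVec_injective_iff_isUnit, blockScalar, isUnit_diagonal, Pi.isUnit_iff]
  rintro (i | i)
  exacts [ha.isUnit, hb.isUnit]

end BlockScalar

theorem dotProduct_transpose_mul_mul_mulVec {n R : Type*} [Fintype n] [CommSemiring R]
    (A M : Matrix n n R) (x : n → R) :
    x ⬝ᵥ ((Aᵀ * M * A) *ᵥ x) = (A *ᵥ x) ⬝ᵥ (M *ᵥ (A *ᵥ x)) := by
  rw [← mulVec_mulVec, ← mulVec_mulVec, dotProduct_mulVec, vecMul_transpose]

theorem fromBlocks_gain_eq {n K : Type*} [Fintype n] [DecidableEq n] [Field K]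
    (B : Matrix n n K) {ε k c : K} (hε : ε ≠ 0) (hk : k ≠ 0) (hc : c ≠ 0) :
    fromBlocks
      (ε ^ 2 • (B + Bᵀ))
      ((ε / (k * c))⁻¹ • (ε ^ 2 • (Bᵀ - 1) + (ε / (k * c) * (ε * k)) • B))
      ((ε / (k * c))⁻¹ • (ε ^ 2 • (B - 1) + (ε / (k * c) * (ε * k)) • Bᵀ))
      ((ε / (k * c))⁻¹ • ((ε * k) • (B + Bᵀ))) =
    (blockScalar ε k)ᵀ *
      fromBlocks (B + Bᵀ) (B + c • (Bᵀ - 1)) (Bᵀ + c • (B - 1)) (c • (B + Bᵀ)) *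
      blockScalar ε k := by
  rw [blockScalar_transpose, blockScalar_mul_fromBlocks_mul]
  congr 1 <;> ext i j <;>
    simp only [Matrix.smul_apply, Matrix.add_apply, Matrix.sub_apply, transpose_apply,
      smul_eq_mul] <;>
    field_simp <;> ring

theorem stmt_9_general {m : ℕ}
    (Be : Matrix (Fin m) (Fin m) ℝ) (ε k : ℝ) (hε : 0 < ε) (hk : 0 < k)
    (e e' : Fin m → ℝ) (α k_p k_d : ℝ)
    (hα : α = ε / (k * (1 + Real.sqrt (e ⬝ᵥ e))))
    (hkp : k_p = ε ^ 2) (hkd : k_d = ε * k)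
    (Λ ΛBe : Matrix (Fin m ⊕ Fin m) (Fin m ⊕ Fin m) ℝ)
    (hΛ : Λ = Matrix.fromBlocks
      (k_p • (Be + Beᵀ))
      (α⁻¹ • (k_p • (Beᵀ - 1) + (α * k_d) • Be))
      (α⁻¹ • (k_p • (Be - 1) + (α * k_d) • Beᵀ))
      (α⁻¹ • (k_d • (Be + Beᵀ))))
    (hΛBe : ΛBe = Matrix.fromBlocks
      (Be + Beᵀ)
      (Be + (1 + Real.sqrt (e ⬝ᵥ e)) • (Beᵀ - 1))
      (Beᵀ + (1 + Real.sqrt (e ⬝ᵥ e)) • (Be - 1))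
      ((1 + Real.sqrt (e ⬝ᵥ e)) • (Be + Beᵀ))) :
    (Sum.elim e e') ⬝ᵥ (Λ *ᵥ Sum.elim e e') =
      (Sum.elim (ε • e) (k • e')) ⬝ᵥ (ΛBe *ᵥ Sum.elim (ε • e) (k • e')) ∧
    (ΛBe.PosDef → ¬(e = 0 ∧ e' = 0) →
      0 < (Sum.elim e e') ⬝ᵥ (Λ *ᵥ Sum.elim e e')) := by
  have hc : 1 + Real.sqrt (e ⬝ᵥ e) ≠ 0 := by positivity
  have hΛ_congr : Λ = (blockScalar ε k)ᵀ * ΛBe * blockScalar ε k := by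
    rw [hΛ, hΛBe, hα, hkp, hkd]
    exact fromBlocks_gain_eq Be hε.ne' hk.ne' hc
  have hquad := dotProduct_transpose_mul_mul_mulVec (blockScalar ε k) ΛBe (Sum.elim e e')
  rw [← hΛ_congr, blockScalar_mulVec_sumElim] at hquad
  refine ⟨hquad, fun hPD hne => ?_⟩
  have hΛ_pos : Λ.PosDef := by
    rw [hΛ_congr, ← conjTranspose_eq_transpose_of_trivial]
    exact hPD.conjTranspose_mul_mul_same (injective_blockScalar_mulVec hε.ne' hk.ne')
  have hx : Sum.elim e e' ≠ 0 := by
    rwa [← Sum.elim_zero_zero, Ne, Sum.elim_eq_iff]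
  simpa only [star_trivial] using hΛ_pos.dotProduct_mulVec_pos hx

/-- With `α = ε/(k(1+|e|))`, `k_p = ε²`, `k_d = εk`, the quadratic forms
of the block matrices `Λ` and `Λ_{B_e}` agree:
`(e, ė)ᵀ Λ (e, ė) = (ε e, k ė)ᵀ Λ_{B_e} (ε e, k ė)`; consequently, if `Λ_{B_e}` is
positive definite then `(e, ė)ᵀ Λ (e, ė) > 0` whenever `(e, ė) ≠ 0`. -/
theorem stmt_9 {m : ℕ} (hm : 1 ≤ m)
    (Be : Matrix (Fin m) (Fin m) ℝ) (ε k : ℝ) (hε : 0 < ε) (hk : 0 < k)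
    (e e' : Fin m → ℝ) (α k_p k_d : ℝ)
    (hα : α = ε / (k * (1 + Real.sqrt (e ⬝ᵥ e))))
    (hkp : k_p = ε ^ 2) (hkd : k_d = ε * k)
    (Λ ΛBe : Matrix (Fin m ⊕ Fin m) (Fin m ⊕ Fin m) ℝ)
    (hΛ : Λ = Matrix.fromBlocks
      (k_p • (Be + Beᵀ))
      (α⁻¹ • (k_p • (Beᵀ - 1) + (α * k_d) • Be))
      (α⁻¹ • (k_p • (Be - 1) + (α * k_d) • Beᵀ))
      (α⁻¹ • (k_d • (Be + Beᵀ))))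
    (hΛBe : ΛBe = Matrix.fromBlocks
      (Be + Beᵀ)
      (Be + (1 + Real.sqrt (e ⬝ᵥ e)) • (Beᵀ - 1))
      (Beᵀ + (1 + Real.sqrt (e ⬝ᵥ e)) • (Be - 1))
      ((1 + Real.sqrt (e ⬝ᵥ e)) • (Be + Beᵀ))) :
    (Sum.elim e e') ⬝ᵥ (Λ *ᵥ Sum.elim e e') =
      (Sum.elim (ε • e) (k • e')) ⬝ᵥ (ΛBe *ᵥ Sum.elim (ε • e) (k • e')) ∧
    (ΛBe.PosDef → ¬(e = 0 ∧ e' = 0) →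
      0 < (Sum.elim e e') ⬝ᵥ (Λ *ᵥ Sum.elim e e')) :=
  stmt_9_general Be ε k hε hk e e' α k_p k_d hα hkp hkd Λ ΛBe hΛ hΛBe
end

section
/- Set γ = 1 − c₃/c₂ ∈ [0, 1). Then for every x ∈ ℝᴺ and every i ∈ ℕ, the i-th iterate satisfies |Pⁱ(x)|² ≤ (c₂/c₁) γⁱ |x|² + (c₂ d)/(c₁ c₃); in particular |Pⁱ(x)| ≤ √(c₂/c₁) γ^{i/2} |x| + √((c₂ d)/(c₁ c₃)). (Exponential ultimate boundedness of a discrete-time system admitting a quadratically sandwiched Lyapunov function with quadratic decrease up to a constant disturbance.) -/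
/-!
Since `V ≤ c₂ |x|²`, the decrease condition gives `V (P x) ≤ γ V x + d` with
`γ = 1 - c₃/c₂`. Iterating this affine contraction bounds `V (Pⁱ x)` by
`γⁱ V x + d / (1 - γ) = γⁱ V x + c₂ d / c₃`, and the quadratic sandwich converts this
back into a bound on `|Pⁱ x|²`; the bound on `|Pⁱ x|` follows from `√(a² + b) ≤ a + √b`.
-/

open Real

theorem one_sub_div_mem_Ico {a b : ℝ} (ha : 0 < a) (hab : a ≤ b) :
    1 - a / b ∈ Set.Ico (0 : ℝ) 1 := by
  have hb : 0 < b := ha.trans_le hab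
  exact ⟨sub_nonneg.2 ((div_le_one hb).2 hab), sub_lt_self 1 (div_pos ha hb)⟩

theorem le_pow_mul_add_div_of_le_mul_add {u : ℕ → ℝ} {γ d : ℝ} (hγ0 : 0 ≤ γ) (hγ1 : γ < 1)
    (hd : 0 ≤ d) (h : ∀ n, u (n + 1) ≤ γ * u n + d) (n : ℕ) :
    u n ≤ γ ^ n * u 0 + d / (1 - γ) := by
  have hγ1' : 0 < 1 - γ := sub_pos.2 hγ1
  induction n with
  | zero => simpa using div_nonneg hd hγ1'.le
  | succ n ih =>
    -- `d / (1 - γ)` is the fixed point of `t ↦ γ t + d`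
    have hfix : γ * (d / (1 - γ)) + d = d / (1 - γ) := by field_simp; ring
    calc u (n + 1) ≤ γ * u n + d := h n
      _ ≤ γ * (γ ^ n * u 0 + d / (1 - γ)) + d := by gcongr
      _ = γ ^ (n + 1) * u 0 + d / (1 - γ) := by rw [pow_succ]; linear_combination hfix

section Lyapunov

variable {E : Type*} [Norm E] {P : E → E} {V : E → ℝ} {c₁ c₂ c₃ d : ℝ}

theorem lyapunov_le_mul_add (hc2 : 0 < c₂) (hc3 : 0 ≤ c₃) (hV : ∀ x, V x ≤ c₂ * ‖x‖ ^ 2)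
    (hdec : ∀ x, V (P x) - V x ≤ -c₃ * ‖x‖ ^ 2 + d) (x : E) :
    V (P x) ≤ (1 - c₃ / c₂) * V x + d := by
  have h : c₃ / c₂ * V x ≤ c₃ * ‖x‖ ^ 2 :=
    calc c₃ / c₂ * V x ≤ c₃ / c₂ * (c₂ * ‖x‖ ^ 2) := by gcongr; exact hV x
      _ = c₃ * ‖x‖ ^ 2 := by field_simp
  linarith [hdec x]

theorem lyapunov_iterate_le (hc3 : 0 < c₃) (hc32 : c₃ ≤ c₂) (hd : 0 ≤ d)
    (hV : ∀ x, V x ≤ c₂ * ‖x‖ ^ 2) (hdec : ∀ x, V (P x) - V x ≤ -c₃ * ‖x‖ ^ 2 + d)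
    (x : E) (i : ℕ) :
    V (P^[i] x) ≤ (1 - c₃ / c₂) ^ i * V x + c₂ * d / c₃ := by
  have hc2 : 0 < c₂ := hc3.trans_le hc32
  obtain ⟨hγ0, hγ1⟩ := one_sub_div_mem_Ico hc3 hc32
  have h := le_pow_mul_add_div_of_le_mul_add (u := fun n ↦ V (P^[n] x)) hγ0 hγ1 hd
    (fun n ↦ by
      simpa only [Function.iterate_succ_apply'] using
        lyapunov_le_mul_add hc2 hc3.le hV hdec (P^[n] x)) i
  rwa [Function.iterate_zero_apply, sub_sub_cancel, div_div_eq_mul_div, mul_comm d] at h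

theorem sq_norm_iterate_le (hc1 : 0 < c₁) (hc3 : 0 < c₃) (hc32 : c₃ ≤ c₂) (hd : 0 ≤ d)
    (hsand : ∀ x, c₁ * ‖x‖ ^ 2 ≤ V x ∧ V x ≤ c₂ * ‖x‖ ^ 2)
    (hdec : ∀ x, V (P x) - V x ≤ -c₃ * ‖x‖ ^ 2 + d) (x : E) (i : ℕ) :
    ‖P^[i] x‖ ^ 2 ≤ c₂ / c₁ * (1 - c₃ / c₂) ^ i * ‖x‖ ^ 2 + c₂ * d / (c₁ * c₃) := by
  have hγ0 := (one_sub_div_mem_Ico hc3 hc32).1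
  have h : c₁ * ‖P^[i] x‖ ^ 2 ≤ (1 - c₃ / c₂) ^ i * (c₂ * ‖x‖ ^ 2) + c₂ * d / c₃ :=
    calc c₁ * ‖P^[i] x‖ ^ 2 ≤ V (P^[i] x) := (hsand _).1
      _ ≤ (1 - c₃ / c₂) ^ i * V x + c₂ * d / c₃ :=
        lyapunov_iterate_le hc3 hc32 hd (fun y ↦ (hsand y).2) hdec x i
      _ ≤ (1 - c₃ / c₂) ^ i * (c₂ * ‖x‖ ^ 2) + c₂ * d / c₃ := by gcongr; exact (hsand x).2
  calc ‖P^[i] x‖ ^ 2 ≤ ((1 - c₃ / c₂) ^ i * (c₂ * ‖x‖ ^ 2) + c₂ * d / c₃) / c₁ :=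
        (le_div_iff₀' hc1).2 h
    _ = c₂ / c₁ * (1 - c₃ / c₂) ^ i * ‖x‖ ^ 2 + c₂ * d / (c₁ * c₃) := by
        field_simp

end Lyapunov

theorem le_add_sqrt_of_sq_le_sq_add {t a b : ℝ} (ha : 0 ≤ a) (hb : 0 ≤ b)
    (h : t ^ 2 ≤ a ^ 2 + b) : t ≤ a + √b := by
  have hsq : t ^ 2 ≤ (a + √b) ^ 2 := by
    nlinarith [sq_sqrt hb, mul_nonneg ha (sqrt_nonneg b)]
  exact le_of_sq_le_sq hsq (add_nonneg ha (sqrt_nonneg b))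

theorem stmt_13_general {N : ℕ}
    (P : EuclideanSpace ℝ (Fin N) → EuclideanSpace ℝ (Fin N))
    (V : EuclideanSpace ℝ (Fin N) → ℝ)
    (c₁ c₂ c₃ d : ℝ)
    (hc1 : 0 < c₁) (hc3 : 0 < c₃) (hc32 : c₃ ≤ c₂) (hd : 0 ≤ d)
    (hsand : ∀ x, c₁ * ‖x‖ ^ 2 ≤ V x ∧ V x ≤ c₂ * ‖x‖ ^ 2)
    (hdec : ∀ x, V (P x) - V x ≤ -c₃ * ‖x‖ ^ 2 + d) :
    (1 - c₃ / c₂) ∈ Set.Ico (0:ℝ) 1 ∧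
    ∀ (x : EuclideanSpace ℝ (Fin N)) (i : ℕ),
      ‖P^[i] x‖ ^ 2 ≤ c₂ / c₁ * (1 - c₃ / c₂) ^ i * ‖x‖ ^ 2 + c₂ * d / (c₁ * c₃) ∧
      ‖P^[i] x‖ ≤ Real.sqrt (c₂ / c₁) * Real.sqrt (1 - c₃ / c₂) ^ i * ‖x‖ +
        Real.sqrt (c₂ * d / (c₁ * c₃)) := by
  have hγ := one_sub_div_mem_Ico hc3 hc32
  have hc2 : 0 < c₂ := hc3.trans_le hc32
  refine ⟨hγ, fun x i ↦ ⟨sq_norm_iterate_le hc1 hc3 hc32 hd hsand hdec x i, ?_⟩⟩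
  have hcoeff : (√(c₂ / c₁) * √(1 - c₃ / c₂) ^ i * ‖x‖) ^ 2
      = c₂ / c₁ * (1 - c₃ / c₂) ^ i * ‖x‖ ^ 2 := by
    rw [mul_pow, mul_pow, sq_sqrt (by positivity), ← pow_mul, mul_comm i 2, pow_mul,
      sq_sqrt hγ.1]
  apply le_add_sqrt_of_sq_le_sq_add (by positivity) (by positivity)
  rw [hcoeff]
  exact sq_norm_iterate_le hc1 hc3 hc32 hd hsand hdec x i

/-- Exponential ultimate boundedness of a discrete-time system admitting
a quadratically sandwiched Lyapunov function with quadratic decrease up to a constant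
disturbance: with `γ = 1 − c₃/c₂ ∈ [0,1)`, every iterate satisfies
`|Pⁱ(x)|² ≤ (c₂/c₁) γⁱ |x|² + (c₂ d)/(c₁ c₃)` and
`|Pⁱ(x)| ≤ √(c₂/c₁) γ^{i/2} |x| + √((c₂ d)/(c₁ c₃))`. -/
theorem stmt_13 {N : ℕ} (hN : 1 ≤ N)
    (P : EuclideanSpace ℝ (Fin N) → EuclideanSpace ℝ (Fin N))
    (V : EuclideanSpace ℝ (Fin N) → ℝ)
    (c₁ c₂ c₃ d : ℝ)
    (hc1 : 0 < c₁) (hc12 : c₁ ≤ c₂) (hc3 : 0 < c₃) (hc32 : c₃ ≤ c₂) (hd : 0 ≤ d)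
    (hsand : ∀ x, c₁ * ‖x‖ ^ 2 ≤ V x ∧ V x ≤ c₂ * ‖x‖ ^ 2)
    (hdec : ∀ x, V (P x) - V x ≤ -c₃ * ‖x‖ ^ 2 + d) :
    (1 - c₃ / c₂) ∈ Set.Ico (0:ℝ) 1 ∧
    ∀ (x : EuclideanSpace ℝ (Fin N)) (i : ℕ),
      ‖P^[i] x‖ ^ 2 ≤ c₂ / c₁ * (1 - c₃ / c₂) ^ i * ‖x‖ ^ 2 + c₂ * d / (c₁ * c₃) ∧
      ‖P^[i] x‖ ≤ Real.sqrt (c₂ / c₁) * Real.sqrt (1 - c₃ / c₂) ^ i * ‖x‖ +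
        Real.sqrt (c₂ * d / (c₁ * c₃)) :=
  stmt_13_general P V c₁ c₂ c₃ d hc1 hc3 hc32 hd hsand hdec
end

section
/- There exist constants σ > 0, c > 0 and d ≥ 0, with d = 0 whenever d_η = d_P = 0, such that the composite Lyapunov function V(η, z) := σ|η|² + V_z(z) satisfies V(P_η(η, z), P_z(η, z)) − V(η, z) ≤ −c(|η|² + |z|²) + d for all (η, z) ∈ ℝᵃ × ℝᵇ. (Core Lyapunov-difference estimate for the full-order Poincaré map built from an exponentially stable restricted Poincaré map plus an exponentially contracting output component.) -/
/-- Young-type inequality: `2Axy ≤ (c/4)y² + (4A²/c)x²` for `c > 0`. -/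
lemma young_aux (c A x y : ℝ) (hc : 0 < c) :
    2 * A * x * y ≤ c / 4 * y ^ 2 + 4 * A ^ 2 / c * x ^ 2 := by
  have h : c / 4 * y ^ 2 + 4 * A ^ 2 / c * x ^ 2 - 2 * A * x * y =
      (c * y - 4 * A * x) ^ 2 / (4 * c) := by
    field_simp
    ring
  have h2 : (0:ℝ) ≤ (c * y - 4 * A * x) ^ 2 / (4 * c) :=
    div_nonneg (sq_nonneg _) (by positivity)
  linarith

/-- Core Lyapunov-difference estimate for the full-order Poincaré map
built from an exponentially stable restricted Poincaré map `ρ` (with Lyapunov function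
`V_z`) plus an exponentially contracting output component `P_η`: there exist
`σ > 0`, `c > 0`, `d ≥ 0` (with `d = 0` whenever `d_η = d_P = 0`) such that the
composite Lyapunov function `V(η, z) = σ|η|² + V_z(z)` satisfies
`V(P_η(η,z), P_z(η,z)) − V(η,z) ≤ −c(|η|² + |z|²) + d` for all `(η, z)`. -/
theorem stmt_14 {a b : ℕ} (ha : 1 ≤ a) (hb : 1 ≤ b)
    (Pη : EuclideanSpace ℝ (Fin a) → EuclideanSpace ℝ (Fin b) → EuclideanSpace ℝ (Fin a))
    (Pz : EuclideanSpace ℝ (Fin a) → EuclideanSpace ℝ (Fin b) → EuclideanSpace ℝ (Fin b))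
    (ρ : EuclideanSpace ℝ (Fin b) → EuclideanSpace ℝ (Fin b))
    (Vz : EuclideanSpace ℝ (Fin b) → ℝ)
    (c₁ c₂ c₃ c₄ CP Lρ β dη dP : ℝ)
    (hc1 : 0 < c₁) (hc2 : 0 < c₂) (hc3 : 0 < c₃) (hc4 : 0 < c₄)
    (hCP : 0 < CP) (hLρ : 0 < Lρ) (hβ0 : 0 ≤ β) (hβ : β ≤ 1 / 2)
    (hdη : 0 ≤ dη) (hdP : 0 ≤ dP)
    (hsand : ∀ z, c₁ * ‖z‖ ^ 2 ≤ Vz z ∧ Vz z ≤ c₂ * ‖z‖ ^ 2)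
    (hdec : ∀ z, Vz (ρ z) - Vz z ≤ -c₃ * ‖z‖ ^ 2)
    (hlip : ∀ z z', |Vz z - Vz z'| ≤ c₄ * ‖z - z'‖ * (‖z‖ + ‖z'‖))
    (hρ : ∀ z, ‖ρ z‖ ≤ Lρ * ‖z‖)
    (hPη : ∀ η z, ‖Pη η z‖ ≤ β * ‖η‖ + dη)
    (hPz : ∀ η z, ‖Pz η z - ρ z‖ ≤ CP * ‖η‖ + dP) :
    ∃ σ > (0:ℝ), ∃ c > (0:ℝ), ∃ d ≥ (0:ℝ),
      ((dη = 0 ∧ dP = 0) → d = 0) ∧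
      ∀ η z, σ * ‖Pη η z‖ ^ 2 + Vz (Pz η z) - (σ * ‖η‖ ^ 2 + Vz z) ≤
        -c * (‖η‖ ^ 2 + ‖z‖ ^ 2) + d := by
  set K₀ : ℝ := c₄ ^ 2 * Lρ ^ 2 * CP ^ 2 / c₃ with hK₀def
  set K₁ : ℝ := c₄ ^ 2 * Lρ ^ 2 / c₃ with hK₁def
  have hK₀pos : 0 < K₀ := by positivity
  have hK₁pos : 0 < K₁ := by positivity
  have hKpos : (0:ℝ) < 4 * K₀ + 2 * c₄ * CP ^ 2 := by positivity
  refine ⟨4 * (4 * K₀ + 2 * c₄ * CP ^ 2), by positivity,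
    min (4 * K₀ + 2 * c₄ * CP ^ 2) (c₃ / 2), lt_min hKpos (by positivity),
    8 * (4 * K₀ + 2 * c₄ * CP ^ 2) * dη ^ 2 + 2 * c₄ * dP ^ 2 + 4 * K₁ * dP ^ 2,
    by positivity, ?_, ?_⟩
  · rintro ⟨h1, h2⟩
    simp [h1, h2]
  · intro η z
    set n := ‖η‖ with hn
    set m := ‖z‖ with hm
    have hn0 : 0 ≤ n := norm_nonneg _
    have hm0 : 0 ≤ m := norm_nonneg _
    set p := ‖Pη η z‖ with hp
    set r := ‖ρ z‖ with hr
    set s := ‖Pz η z - ρ z‖ with hs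
    have hp0 : 0 ≤ p := norm_nonneg _
    have hr0 : 0 ≤ r := norm_nonneg _
    have hs0 : 0 ≤ s := norm_nonneg _
    have hq : ‖Pz η z‖ ≤ s + r := by
      have := norm_sub_norm_le (Pz η z) (ρ z)
      linarith
    have hq0 : 0 ≤ ‖Pz η z‖ := norm_nonneg _
    -- bound on p
    have hpB : p ≤ n / 2 + dη := by
      have h1 := hPη η z
      nlinarith [hn0]
    have hp2 : p ^ 2 ≤ 1 / 2 * n ^ 2 + 2 * dη ^ 2 := by
      nlinarith [sq_nonneg (n / 2 - dη)]
    have hp2' : 4 * (4 * K₀ + 2 * c₄ * CP ^ 2) * p ^ 2 ≤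
        4 * (4 * K₀ + 2 * c₄ * CP ^ 2) * (1 / 2 * n ^ 2 + 2 * dη ^ 2) :=
      mul_le_mul_of_nonneg_left hp2 (by positivity)
    -- Lipschitz bound for the z-component
    have hsB : s ≤ CP * n + dP := hPz η z
    have hrB : r ≤ Lρ * m := hρ z
    have hlip1 : Vz (Pz η z) - Vz (ρ z) ≤ c₄ * s * (‖Pz η z‖ + r) := by
      have h1 := abs_le.mp (hlip (Pz η z) (ρ z))
      linarith [h1.2]
    have hmain' : Vz (Pz η z) - Vz (ρ z) ≤
        2 * c₄ * Lρ * CP * n * m + c₄ * CP ^ 2 * n ^ 2 + 2 * c₄ * CP * dP * n +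
          2 * c₄ * Lρ * dP * m + c₄ * dP ^ 2 := by
      have hqr : ‖Pz η z‖ + r ≤ 2 * Lρ * m + CP * n + dP := by linarith
      have hqr0 : 0 ≤ ‖Pz η z‖ + r := by linarith
      have hmul : s * (‖Pz η z‖ + r) ≤ (CP * n + dP) * (2 * Lρ * m + CP * n + dP) :=
        mul_le_mul hsB hqr hqr0 (by positivity)
      have hmul2 : c₄ * (s * (‖Pz η z‖ + r)) ≤
          c₄ * ((CP * n + dP) * (2 * Lρ * m + CP * n + dP)) :=
        mul_le_mul_of_nonneg_left hmul hc4.le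
      calc Vz (Pz η z) - Vz (ρ z) ≤ c₄ * s * (‖Pz η z‖ + r) := hlip1
        _ = c₄ * (s * (‖Pz η z‖ + r)) := by ring
        _ ≤ c₄ * ((CP * n + dP) * (2 * Lρ * m + CP * n + dP)) := hmul2
        _ = 2 * c₄ * Lρ * CP * n * m + c₄ * CP ^ 2 * n ^ 2 + 2 * c₄ * CP * dP * n +
              2 * c₄ * Lρ * dP * m + c₄ * dP ^ 2 := by ring
    have hd := hdec z
    -- Young-type inequalities
    have h1 : 2 * c₄ * Lρ * CP * n * m ≤ c₃ / 4 * m ^ 2 + 4 * K₀ * n ^ 2 := by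
      have := young_aux c₃ (c₄ * Lρ * CP) n m hc3
      have hEq : 4 * (c₄ * Lρ * CP) ^ 2 / c₃ = 4 * K₀ := by
        rw [hK₀def]; ring
      calc 2 * c₄ * Lρ * CP * n * m = 2 * (c₄ * Lρ * CP) * n * m := by ring
        _ ≤ c₃ / 4 * m ^ 2 + 4 * (c₄ * Lρ * CP) ^ 2 / c₃ * n ^ 2 := this
        _ = c₃ / 4 * m ^ 2 + 4 * K₀ * n ^ 2 := by rw [hEq]
    have h2 : 2 * c₄ * Lρ * dP * m ≤ c₃ / 4 * m ^ 2 + 4 * K₁ * dP ^ 2 := by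
      have := young_aux c₃ (c₄ * Lρ) dP m hc3
      have hEq : 4 * (c₄ * Lρ) ^ 2 / c₃ = 4 * K₁ := by
        rw [hK₁def]; ring
      calc 2 * c₄ * Lρ * dP * m = 2 * (c₄ * Lρ) * dP * m := by ring
        _ ≤ c₃ / 4 * m ^ 2 + 4 * (c₄ * Lρ) ^ 2 / c₃ * dP ^ 2 := this
        _ = c₃ / 4 * m ^ 2 + 4 * K₁ * dP ^ 2 := by rw [hEq]
    have h3 : 2 * c₄ * CP * dP * n ≤ c₄ * CP ^ 2 * n ^ 2 + c₄ * dP ^ 2 := by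
      have hsq : 0 ≤ c₄ * (CP * n - dP) ^ 2 := mul_nonneg hc4.le (sq_nonneg _)
      have hexp : c₄ * (CP * n - dP) ^ 2 =
          c₄ * CP ^ 2 * n ^ 2 - 2 * c₄ * CP * dP * n + c₄ * dP ^ 2 := by ring
      linarith
    -- comparisons with the min
    have hmin1 : min (4 * K₀ + 2 * c₄ * CP ^ 2) (c₃ / 2) ≤ 4 * K₀ + 2 * c₄ * CP ^ 2 :=
      min_le_left _ _
    have hmin2 : min (4 * K₀ + 2 * c₄ * CP ^ 2) (c₃ / 2) ≤ c₃ / 2 := min_le_right _ _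
    have hcn : min (4 * K₀ + 2 * c₄ * CP ^ 2) (c₃ / 2) * n ^ 2 ≤
        (4 * K₀ + 2 * c₄ * CP ^ 2) * n ^ 2 :=
      mul_le_mul_of_nonneg_right hmin1 (sq_nonneg n)
    have hcm : min (4 * K₀ + 2 * c₄ * CP ^ 2) (c₃ / 2) * m ^ 2 ≤ c₃ / 2 * m ^ 2 :=
      mul_le_mul_of_nonneg_right hmin2 (sq_nonneg m)
    linarith [hp2', hmain', hd, h1, h2, h3, hcn, hcm]
end
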